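/- For every ε ≥ 0, the map F_{C,ε} : ℝ³ → ℝ³ is a bijection with everywhere invertible derivative of determinant 1, and the induced map f_{C,ε} : 𝕋³ → 𝕋³ is a bijection; thus f_{C,ε} is a volume-preserving diffeomorphism of 𝕋³ for every ε ≥ 0. -/

import Mathlib

/-!
`F_{C,ε} = A ∘ S`, where `A` is the integer matrix `!![2, 1, 0; 1, 2, 1; 0, 1, 1]` of determinant `1`
and `S (x, y, z) = (x, y + ε sin 2πx, z - ε sin 2πx)` is a shear. Hence `F⁻¹ = S⁻¹ ∘ A⁻¹` is explicit;
since `A⁻¹` is again an integer matrix and `sin 2πx` is `1`-periodic, `F⁻¹ (w + m) = F⁻¹ w + A⁻¹ m`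
for `m ∈ ℤ³`, so `F⁻¹` descends to `𝕋³` as well and the induced map is a bijection.
The derivative of `F` at `v` is `A` plus the rank-one map `u ↦ 2πε cos (2π v₀) u₀ • (1, 1, 0)`;
as `A⁻¹ (1, 1, 0) = (0, 1, -1)` has vanishing `0`-th coordinate, its determinant is still `1`.
-/

/-- Lift to `ℝ³` of the conservative family `f_{C,ε}`. -/
noncomputable def FC (ε : ℝ) (v : Fin 3 → ℝ) : Fin 3 → ℝ :=
  ![2 * v 0 + v 1 + ε * Real.sin (2 * Real.pi * v 0),
    v 0 + 2 * v 1 + v 2 + ε * Real.sin (2 * Real.pi * v 0),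
    v 1 + v 2]

/-- The projection `ℝ³ → 𝕋³ = ℝ³/ℤ³`. -/
noncomputable def torusProj (v : Fin 3 → ℝ) : Fin 3 → AddCircle (1 : ℝ) :=
  fun i => (v i : AddCircle (1 : ℝ))

open Function Real Matrix

theorem Function.Semiconj.bijective_of_inverse {α β : Type*} {p : α → β} {F G : α → α}
    {g : β → β} (h : Semiconj p F g) (hp : Surjective p) (hGF : LeftInverse G F)
    (hFG : RightInverse G F) (hG : ∀ w w', p w = p w' → p (G w) = p (G w')) :
    Bijective g := by
  refine ⟨fun a b hab => ?_, fun y => ?_⟩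
  · obtain ⟨u, rfl⟩ := hp a
    obtain ⟨u', rfl⟩ := hp b
    rw [← h.eq, ← h.eq] at hab
    simpa only [hGF _] using hG _ _ hab
  · obtain ⟨w, rfl⟩ := hp y
    exact ⟨p (G w), by rw [← h.eq, hFG]⟩

lemma LinearMap.bijective_of_det_eq_one {R M : Type*} [CommRing R] [AddCommGroup M] [Module R M]
    [Module.Free R M] [Module.Finite R M] {f : M →ₗ[R] M} (hf : LinearMap.det f = 1) :
    Bijective f :=
  (Module.End.isUnit_iff f).1 ((LinearMap.isUnit_iff_isUnit_det f).2 (hf ▸ isUnit_one))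

theorem hasFDerivAt_add_smul_comp_apply {ι E : Type*} [Fintype ι] [NormedAddCommGroup E]
    [NormedSpace ℝ E] (L : (ι → ℝ) →L[ℝ] E) {φ : ℝ → ℝ} {φ' : ℝ} (i : ι) (e : E)
    {v : ι → ℝ} (hφ : HasDerivAt φ φ' (v i)) :
    HasFDerivAt (fun w => L w + φ (w i) • e)
      (L + (φ' • ContinuousLinearMap.proj i).smulRight e) v :=
  L.hasFDerivAt.add ((hφ.comp_hasFDerivAt v (hasFDerivAt_apply i v)).smul_const e)

lemma AddCircle.coe_eq_coe_iff_exists_intCast_add {x y : ℝ} :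
    (x : AddCircle (1 : ℝ)) = y ↔ ∃ k : ℤ, x = y + k := by
  rw [← sub_eq_zero, ← AddCircle.coe_sub, AddCircle.coe_eq_zero_iff]
  simp only [zsmul_eq_mul, mul_one, eq_sub_iff_add_eq']
  exact exists_congr fun k => eq_comm

lemma Real.sin_two_pi_mul_add_intCast (x : ℝ) (k : ℤ) :
    sin (2 * π * (x + k)) = sin (2 * π * x) := by
  rw [← sin_add_int_mul_two_pi (2 * π * x) k]
  ring_nf

lemma torusProj_surjective : Surjective torusProj := fun a =>
  ⟨fun i => (a i).out, funext fun i => (a i).out_eq⟩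

lemma torusProj_eq_torusProj_iff {w w' : Fin 3 → ℝ} :
    torusProj w = torusProj w' ↔ ∃ m : Fin 3 → ℤ, w = w' + fun i => (m i : ℝ) := by
  simp only [torusProj, funext_iff, AddCircle.coe_eq_coe_iff_exists_intCast_add, Pi.add_apply]
  exact Classical.skolem

noncomputable def FCLinear : (Fin 3 → ℝ) →L[ℝ] (Fin 3 → ℝ) :=
  LinearMap.toContinuousLinearMap (Matrix.toLin' !![2, 1, 0; 1, 2, 1; 0, 1, 1])

def FCLinearInv : Matrix (Fin 3) (Fin 3) ℤ := !![1, -1, 1; -1, 2, -2; 1, -2, 3]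

noncomputable def FCInv (ε : ℝ) (w : Fin 3 → ℝ) : Fin 3 → ℝ :=
  ![w 0 - w 1 + w 2,
    -w 0 + 2 * w 1 - 2 * w 2 - ε * sin (2 * π * (w 0 - w 1 + w 2)),
    w 0 - 2 * w 1 + 3 * w 2 + ε * sin (2 * π * (w 0 - w 1 + w 2))]

lemma FC_FCInv (ε : ℝ) : RightInverse (FCInv ε) (FC ε) := by
  intro w
  funext i
  fin_cases i <;> simp [FC, FCInv] <;> ring

lemma FCInv_FC (ε : ℝ) : LeftInverse (FCInv ε) (FC ε) := by
  intro v
  have hx : FC ε v 0 - FC ε v 1 + FC ε v 2 = v 0 := by simp [FC]; ring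
  funext i
  fin_cases i <;> simp only [FCInv, hx] <;> simp [FC] <;> ring

lemma FCInv_add_intCast (ε : ℝ) (w : Fin 3 → ℝ) (m : Fin 3 → ℤ) :
    FCInv ε (w + fun i => (m i : ℝ)) = FCInv ε w + fun i => ((FCLinearInv *ᵥ m) i : ℝ) := by
  have hx : (w + fun i => (m i : ℝ)) 0 - (w + fun i => (m i : ℝ)) 1 + (w + fun i => (m i : ℝ)) 2
      = w 0 - w 1 + w 2 + ((m 0 - m 1 + m 2 : ℤ) : ℝ) := by
    push_cast
    simp only [Pi.add_apply]
    ring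
  funext i
  fin_cases i <;> simp only [FCInv, hx, sin_two_pi_mul_add_intCast] <;>
    simp [FCLinearInv, mulVec, dotProduct, Fin.sum_univ_three] <;> ring

lemma bijective_of_semiconj_torusProj_FC (ε : ℝ)
    {g : (Fin 3 → AddCircle (1 : ℝ)) → (Fin 3 → AddCircle (1 : ℝ))}
    (hg : ∀ v, g (torusProj v) = torusProj (FC ε v)) : Bijective g := by
  refine Semiconj.bijective_of_inverse (fun v => (hg v).symm) torusProj_surjective
    (FCInv_FC ε) (FC_FCInv ε) fun w w' h => ?_
  obtain ⟨m, rfl⟩ := torusProj_eq_torusProj_iff.1 h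
  exact torusProj_eq_torusProj_iff.2 ⟨_, FCInv_add_intCast ε w' m⟩

lemma FC_eq_linear_add (ε : ℝ) :
    FC ε = fun v => FCLinear v + (ε * sin (2 * π * v 0)) • ![1, 1, 0] := by
  funext v i
  fin_cases i <;> simp [FC, FCLinear, dotProduct, Fin.sum_univ_three]

lemma hasFDerivAt_FC (ε : ℝ) (v : Fin 3 → ℝ) :
    HasFDerivAt (FC ε) (FCLinear + ((2 * π * ε * cos (2 * π * v 0)) •
      ContinuousLinearMap.proj 0).smulRight ![1, 1, 0]) v := by
  have hφ : HasDerivAt (fun x => ε * sin (2 * π * x)) (2 * π * ε * cos (2 * π * v 0)) (v 0) := by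
    refine (((hasDerivAt_id' (v 0)).const_mul (2 * π)).sin.const_mul ε).congr_deriv ?_
    ring
  rw [FC_eq_linear_add]
  exact hasFDerivAt_add_smul_comp_apply FCLinear 0 _ hφ

lemma det_FCLinear_add_smulRight (c : ℝ) :
    LinearMap.det ((FCLinear + (c • ContinuousLinearMap.proj 0).smulRight ![1, 1, 0] :
      (Fin 3 → ℝ) →L[ℝ] (Fin 3 → ℝ)) : (Fin 3 → ℝ) →ₗ[ℝ] (Fin 3 → ℝ)) = 1 := by
  rw [← LinearMap.det_toMatrix', det_fin_three]
  simp [FCLinear, LinearMap.toMatrix'_apply]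
  ring

theorem FC_bijective_general (ε : ℝ) :
    Function.Bijective (FC ε) ∧
    (∀ v : Fin 3 → ℝ,
      LinearMap.det ((fderiv ℝ (FC ε) v : (Fin 3 → ℝ) →L[ℝ] (Fin 3 → ℝ)) :
          (Fin 3 → ℝ) →ₗ[ℝ] (Fin 3 → ℝ)) = 1 ∧
      Function.Bijective (fderiv ℝ (FC ε) v)) ∧
    ∀ g : (Fin 3 → AddCircle (1 : ℝ)) → (Fin 3 → AddCircle (1 : ℝ)),
      (∀ v, g (torusProj v) = torusProj (FC ε v)) → Function.Bijective g := by
  refine ⟨bijective_iff_has_inverse.2 ⟨FCInv ε, FCInv_FC ε, FC_FCInv ε⟩, fun v => ?_,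
    fun g hg => bijective_of_semiconj_torusProj_FC ε hg⟩
  have hdet := det_FCLinear_add_smulRight (2 * π * ε * cos (2 * π * v 0))
  rw [(hasFDerivAt_FC ε v).fderiv]
  exact ⟨hdet, LinearMap.bijective_of_det_eq_one hdet⟩

/-- For every `ε ≥ 0`, `F_{C,ε} : ℝ³ → ℝ³` is a bijection whose derivative is everywhere
invertible with determinant `1`, and the induced map `f_{C,ε} : 𝕋³ → 𝕋³` is a bijection:
`f_{C,ε}` is a volume-preserving diffeomorphism of `𝕋³`. -/
theorem FC_bijective (ε : ℝ) (hε0 : 0 ≤ ε) :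
    Function.Bijective (FC ε) ∧
    (∀ v : Fin 3 → ℝ,
      LinearMap.det ((fderiv ℝ (FC ε) v : (Fin 3 → ℝ) →L[ℝ] (Fin 3 → ℝ)) :
          (Fin 3 → ℝ) →ₗ[ℝ] (Fin 3 → ℝ)) = 1 ∧
      Function.Bijective (fderiv ℝ (FC ε) v)) ∧
    ∀ g : (Fin 3 → AddCircle (1 : ℝ)) → (Fin 3 → AddCircle (1 : ℝ)),
      (∀ v, g (torusProj v) = torusProj (FC ε v)) → Function.Bijective g :=
  FC_bijective_general ε
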